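/- arXiv:1405.2435 — 5 statements merged into one kernel-verified Lean document; each statement's English description precedes it below -/
import Mathlib

section
/- Fix n ≥ 1 and 1 ≤ k ≤ n. The ℚ-linear span of all n×n 0-1 matrices that have exactly one 1 in each row and whose nonzero entries all lie in a fixed set of k columns has dimension exactly n(k-1)+1. -/
/-- The 0-1 matrix of a mapping `f` of an `n`-element set. -/
def matOf {n : ℕ} (f : Fin n → Fin n) : Matrix (Fin n) (Fin n) ℚ :=
  fun i j => if f i = j then 1 else 0

/-!
Fix a column `c ∈ K` and write `E i j` for the matrix units. The matrix of `f` is the matrix of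
the constant map `c` plus the row corrections `E i (f i) - E i c`, so the span is spanned by the
constant matrix and the `E i j - E i c` with `j ∈ K \ {c}`; each of these is in turn the
difference of the matrices of two maps into `K`. These `n (k - 1) + 1` matrices are independent:
entry `(i, j)` with `j ≠ c` isolates `E i j - E i c`, and the sum over `K` of one row kills every
correction but not the constant matrix.
-/

open Module Submodule Set

namespace Matrix

variable {R m n : Type*} [Ring R] [DecidableEq m] [DecidableEq n]

variable (R) in
def ofFun (f : m → n) : Matrix m n R :=
  of fun i j => if f i = j then 1 else 0

theorem ofFun_update_sub_ofFun (f : m → n) (i : m) (j : n) :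
    ofFun R (Function.update f i j) - ofFun R f = single i j 1 - single i (f i) 1 := by
  ext a b
  by_cases hai : a = i
  · subst hai; simp [ofFun, single_apply]
  · simp [ofFun, hai, Ne.symm hai]

variable (R m) in
def ofFunBasis (K : Finset n) (c : n) : Option (m × K.erase c) → Matrix m n R
  | none => ofFun R fun _ => c
  | some (i, j) => single i (j : n) 1 - single i c 1

theorem linearIndependent_ofFunBasis [Nonempty m] {K : Finset n} {c : n} (hc : c ∈ K) :
    LinearIndependent R (ofFunBasis R m K c) := by
  inhabit m
  let φ : Option (m × K.erase c) → Dual R (Matrix m n R)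
    | none => ∑ j ∈ K, entryLinearMap R R default j
    | some (i, j) => entryLinearMap R R i j
  refine .of_pairwise_dual_eq_zero_one _ φ ?_ ?_
  · rintro (_ | ⟨i, j, hj⟩) (_ | ⟨i', j', hj'⟩) hne
    · exact absurd rfl hne
    · rcases eq_or_ne i' default with rfl | hi'
      · simp [φ, ofFunBasis, single_apply, Finset.mem_of_mem_erase hj', hc]
      · simp [φ, ofFunBasis, hi']
    · simp [φ, ofFunBasis, ofFun, (Finset.ne_of_mem_erase hj).symm]
    · simp only [φ, ofFunBasis, map_sub, entryLinearMap_apply, single_apply,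
        (Finset.ne_of_mem_erase hj).symm, and_false, if_false, sub_zero, ite_eq_right_iff]
      rintro ⟨rfl, rfl⟩
      exact absurd rfl hne
  · rintro (_ | ⟨i, j, hj⟩)
    · simp [φ, ofFunBasis, ofFun, hc]
    · simp [φ, ofFunBasis, (Finset.ne_of_mem_erase hj).symm]

variable [Fintype m]

theorem ofFun_eq_sum_single (f : m → n) : ofFun R f = ∑ i, single i (f i) 1 := by
  ext i j
  rw [sum_apply, Finset.sum_eq_single i] <;> simp +contextual [ofFun, single_apply]

theorem ofFun_eq_ofFun_const_add_sum (f : m → n) (c : n) :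
    ofFun R f = ofFun R (fun _ => c) + ∑ i, (single i (f i) 1 - single i c 1) := by
  rw [Finset.sum_sub_distrib, ofFun_eq_sum_single, ofFun_eq_sum_single]
  abel

theorem span_ofFun_eq_span_ofFunBasis {K : Finset n} {c : n} (hc : c ∈ K) :
    span R {M | ∃ f : m → n, (∀ i, f i ∈ K) ∧ M = ofFun R f} =
      span R (range (ofFunBasis R m K c)) := by
  apply le_antisymm
  · rw [span_le]
    rintro M ⟨f, hf, rfl⟩
    rw [ofFun_eq_ofFun_const_add_sum f c]
    refine add_mem (subset_span ⟨none, rfl⟩) (sum_mem fun i _ => ?_)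
    by_cases hfi : f i = c
    · simp [hfi]
    · exact subset_span ⟨some (i, ⟨f i, Finset.mem_erase.mpr ⟨hfi, hf i⟩⟩), rfl⟩
  · rw [span_le]
    rintro M ⟨_ | ⟨i, j, hj⟩, rfl⟩
    · exact subset_span ⟨fun _ => c, fun _ => hc, rfl⟩
    · have hmem : ∀ i', Function.update (fun _ => c) i j i' ∈ K := fun i' => by
        rcases eq_or_ne i' i with rfl | h
        · simpa using Finset.mem_of_mem_erase hj
        · simpa [h] using hc
      have hdiff : ofFunBasis R m K c (some (i, ⟨j, hj⟩)) =
          ofFun R (Function.update (fun _ => c) i j) - ofFun R fun _ => c :=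
        (ofFun_update_sub_ofFun (fun _ => c) i j).symm
      rw [SetLike.mem_coe, hdiff]
      exact sub_mem (subset_span ⟨_, hmem, rfl⟩) (subset_span ⟨_, fun _ => hc, rfl⟩)

theorem finrank_span_ofFun [StrongRankCondition R] [Nonempty m] {K : Finset n}
    (hK : K.Nonempty) :
    finrank R (span R {M | ∃ f : m → n, (∀ i, f i ∈ K) ∧ M = ofFun R f}) =
      Fintype.card m * (K.card - 1) + 1 := by
  obtain ⟨c, hc⟩ := hK
  have := nontrivial_of_invariantBasisNumber R
  rw [span_ofFun_eq_span_ofFunBasis hc, finrank_span_eq_card (linearIndependent_ofFunBasis hc),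
    Fintype.card_option, Fintype.card_prod, Fintype.card_coe, Finset.card_erase_of_mem hc]

end Matrix

theorem dim_span_mapping_matrices_into_k_columns_general {n k : ℕ}
    (K : Finset (Fin n)) (hK : K.card = k) (hk : 1 ≤ k) :
    Module.finrank ℚ
      ↥(Submodule.span ℚ
        {M : Matrix (Fin n) (Fin n) ℚ |
          ∃ f : Fin n → Fin n, (∀ i, f i ∈ K) ∧ M = matOf f}) =
      n * (k - 1) + 1 := by
  obtain ⟨c, hc⟩ : K.Nonempty := Finset.card_pos.mp (hK ▸ hk)
  have : Nonempty (Fin n) := ⟨c⟩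
  have hmat : (matOf : (Fin n → Fin n) → _) = Matrix.ofFun ℚ := rfl
  rw [hmat, Matrix.finrank_span_ofFun ⟨c, hc⟩, Fintype.card_fin, hK]

/-- The ℚ-linear span of all `n × n` 0-1 matrices with exactly one unit per
row whose nonzero entries lie in a fixed set `K` of `k` columns
(`1 ≤ k ≤ n`) has dimension exactly `n(k-1)+1`. -/
theorem dim_span_mapping_matrices_into_k_columns {n k : ℕ} (hn : 1 ≤ n)
    (K : Finset (Fin n)) (hK : K.card = k) (hk : 1 ≤ k) :
    Module.finrank ℚ
      ↥(Submodule.span ℚ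
        {M : Matrix (Fin n) (Fin n) ℚ |
          ∃ f : Fin n → Fin n, (∀ i, f i ∈ K) ∧ M = matOf f}) =
      n * (k - 1) + 1 :=
  dim_span_mapping_matrices_into_k_columns_general K hK hk
end

section
/- The ℚ-linear span of all n×n 0-1 matrices with exactly one 1 in each row has dimension at most n(n-1)+1. -/
/-- Row-sum comparison map. -/
def rowSumMap (n : ℕ) [NeZero n] : Matrix (Fin n) (Fin n) ℚ →ₗ[ℚ] (Fin n → ℚ) where
  toFun M := fun i => (∑ j, M i j) - (∑ j, M 0 j)
  map_add' M N := by
    funext i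
    simp [Finset.sum_add_distrib]
    ring
  map_smul' c M := by
    funext i
    show (∑ j, c * M i j) - (∑ j, c * M 0 j) = c * ((∑ j, M i j) - (∑ j, M 0 j))
    rw [mul_sub, Finset.mul_sum, Finset.mul_sum]

/-- The ℚ-linear span of all `n × n` 0-1 matrices with exactly one unit in
each row has dimension at most `n(n-1)+1`. -/
theorem dim_span_all_mapping_matrices (n : ℕ) :
    Module.finrank ℚ
      ↥(Submodule.span ℚ
        {M : Matrix (Fin n) (Fin n) ℚ | ∃ f : Fin n → Fin n, M = matOf f}) ≤
      n * (n - 1) + 1 := by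
  rcases Nat.eq_zero_or_pos n with hn | hn
  · subst hn
    calc Module.finrank ℚ _ ≤ Module.finrank ℚ (Matrix (Fin 0) (Fin 0) ℚ) :=
          Submodule.finrank_le _
      _ = 0 := by simp [Module.finrank_matrix]
      _ ≤ _ := by omega
  haveI : NeZero n := ⟨hn.ne'⟩
  set L := rowSumMap n with hL
  -- the span is contained in the kernel of L
  have hsub : Submodule.span ℚ
      {M : Matrix (Fin n) (Fin n) ℚ | ∃ f : Fin n → Fin n, M = matOf f} ≤
      LinearMap.ker L := by
    rw [Submodule.span_le]
    rintro M ⟨f, rfl⟩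
    simp only [SetLike.mem_coe, LinearMap.mem_ker]
    funext i
    have h1 : ∀ k : Fin n, (∑ j, matOf f k j) = 1 := by
      intro k
      simp [matOf]
    show (∑ j, matOf f i j) - (∑ j, matOf f 0 j) = 0
    rw [h1, h1]; ring
  -- linear independent family in the range of L
  have hind : LinearIndependent ℚ
      (fun i : {i : Fin n // i ≠ 0} => (Pi.single (i : Fin n) (1 : ℚ) : Fin n → ℚ)) := by
    have := (Pi.basisFun ℚ (Fin n)).linearIndependent
    have h2 := this.comp (Subtype.val : {i : Fin n // i ≠ 0} → Fin n)
      Subtype.val_injective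
    convert h2 using 1
    funext i
    simp [Pi.basisFun_apply]
  have hmem : ∀ i : {i : Fin n // i ≠ 0},
      (Pi.single (i : Fin n) (1 : ℚ) : Fin n → ℚ) ∈ LinearMap.range L := by
    intro i
    refine ⟨Matrix.single (i : Fin n) 0 (1 : ℚ), ?_⟩
    have h0 : (0 : Fin n) ≠ (i : Fin n) := fun h => i.2 h.symm
    funext k
    rw [hL]
    simp only [rowSumMap, LinearMap.coe_mk, AddHom.coe_mk, Matrix.single,
      Matrix.of_apply, ite_and, Pi.single_apply]
    by_cases hk : (i : Fin n) = k
    · subst hk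
      simp [Finset.sum_ite_eq, Ne.symm h0]
    · simp [Finset.sum_ite_eq, hk, Ne.symm hk, Ne.symm h0]
  -- lower bound on rank of range
  have hrange : n - 1 ≤ Module.finrank ℚ (LinearMap.range L) := by
    have hcard : Fintype.card {i : Fin n // i ≠ 0} = n - 1 := by
      rw [Fintype.card_subtype_compl]
      simp
    rw [← hcard]
    have hind' : LinearIndependent ℚ
        (fun i : {i : Fin n // i ≠ 0} =>
          (⟨Pi.single (i : Fin n) (1 : ℚ), hmem i⟩ : LinearMap.range L)) := by
      apply LinearIndependent.of_comp (LinearMap.range L).subtype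
      exact hind
    exact hind'.fintype_card_le_finrank
  have hle : Module.finrank ℚ
      ↥(Submodule.span ℚ
        {M : Matrix (Fin n) (Fin n) ℚ | ∃ f : Fin n → Fin n, M = matOf f}) ≤
      Module.finrank ℚ (LinearMap.ker L) := Submodule.finrank_mono hsub
  refine hle.trans ?_
  have hrn := LinearMap.finrank_range_add_finrank_ker L
  have hdim : Module.finrank ℚ (Matrix (Fin n) (Fin n) ℚ) = n * (n - 1) + n := by
    rw [Module.finrank_matrix]
    cases n with
    | zero => simp
    | succ m => simp [Fintype.card_fin]; ring
  rw [hdim] at hrn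
  obtain ⟨A, hA⟩ : ∃ A, A = n * (n - 1) := ⟨_, rfl⟩
  rw [← hA] at hrn ⊢
  omega
end

section
/- Let s be a synchronizing word of an n-state complete DFA synchronizing to a single state q, and let S be the rational series depending on Q = {q}, i.e., (S,u) = C(M_u − E)P^t with P^t the characteristic vector of {q}. Then for the ℚ-span V of the matrices M_v over all suffixes v of s with (S,v) ≥ n − i, one has dim(V) ≤ (i−1)n + 1. -/
/-- The 0-1 matrix of the action of the word `w` on the states `Fin n`. -/
def wordMat {n : ℕ} {A : Type*} (δ : Fin n → A → Fin n) (w : List A) :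
    Matrix (Fin n) (Fin n) ℚ :=
  fun i j => if w.foldl δ i = j then 1 else 0

/-- The rational series `(S,u) = C (M_u − E) Pᵗ` depending on `Q = {q}`. -/
def ser {n : ℕ} (q : Fin n) (M : Matrix (Fin n) (Fin n) ℚ) : ℚ :=
  ∑ i, ∑ j, (M - 1) i j * (if j = q then 1 else 0)

/-!
Let `v₀` be a shortest suffix of `s` with `(S,v₀) ≥ n − i`. Every other such suffix `v` ends
with `v₀`, so the image of the action of `v` lies in the image `T` of `v₀`; and since at least
`n − i + 1` states are sent to `q` by `v₀`, `|T| ≤ i`. The matrix of a map into `T` is the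
matrix of the constant map to a fixed `t₀ ∈ T` plus a combination of the `n (|T| − 1)` differences
`E_{p,t} − E_{p,t₀}` with `t ∈ T \ {t₀}`, which bounds the dimension by `n (i − 1) + 1`.
-/

open Finset Matrix Module Submodule

section FunMatrix

variable {K ι : Type*} [Field K] [Fintype ι] [DecidableEq ι]

def funMatrix (f : ι → ι) : Matrix ι ι K :=
  of fun i j => if f i = j then 1 else 0

theorem funMatrix_eq_sum_single (f : ι → ι) :
    (funMatrix f : Matrix ι ι K) = ∑ p, single p (f p) 1 := by
  ext i j
  rw [Matrix.sum_apply, sum_eq_single i (fun p _ hp => by simp [hp]) (by simp)]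
  simp [funMatrix, single_apply]

theorem funMatrix_sub_funMatrix_const (f : ι → ι) (t₀ : ι) :
    (funMatrix f : Matrix ι ι K) - funMatrix (fun _ => t₀) =
      ∑ p, (single p (f p) 1 - single p t₀ 1) := by
  rw [funMatrix_eq_sum_single, funMatrix_eq_sum_single, sum_sub_distrib]

theorem finrank_span_funMatrix_le (T : Finset ι) (hT : T.Nonempty) :
    finrank K (span K (funMatrix (K := K) '' {f | ∀ p, f p ∈ T})) ≤
      Fintype.card ι * (#T - 1) + 1 := by
  classical
  obtain ⟨t₀, ht₀⟩ := hT
  let G : Finset (Matrix ι ι K) := insert (funMatrix fun _ => t₀)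
    ((univ ×ˢ T.erase t₀).image fun pt => single pt.1 pt.2 1 - single pt.1 t₀ 1)
  have hspan : span K (funMatrix '' {f | ∀ p, f p ∈ T}) ≤ span K (G : Set (Matrix ι ι K)) := by
    rw [span_le]
    rintro _ ⟨f, hf, rfl⟩
    rw [← sub_add_cancel (funMatrix f) (funMatrix fun _ => t₀), funMatrix_sub_funMatrix_const]
    refine add_mem (sum_mem fun p _ => ?_) (subset_span (mem_coe.2 (mem_insert_self _ _)))
    by_cases hp : f p = t₀
    · simp [hp]
    · exact subset_span <| mem_insert_of_mem <|
        mem_image.2 ⟨(p, f p), mem_product.2 ⟨mem_univ p, mem_erase.2 ⟨hp, hf p⟩⟩, rfl⟩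
  have hG : #G ≤ Fintype.card ι * (#T - 1) + 1 := by
    calc #G ≤ #(univ ×ˢ T.erase t₀) + 1 :=
          (card_insert_le _ _).trans (Nat.add_le_add_right card_image_le 1)
      _ = Fintype.card ι * (#T - 1) + 1 := by rw [card_product, card_univ, card_erase_of_mem ht₀]
  calc finrank K (span K (funMatrix '' {f | ∀ p, f p ∈ T}))
      ≤ finrank K (span K (G : Set (Matrix ι ι K))) := finrank_mono hspan
    _ ≤ #G := finrank_span_finset_le_card G
    _ ≤ _ := hG

end FunMatrix

theorem Finset.card_image_univ_add_card_fiber_le {α β : Type*} [Fintype α] [DecidableEq β]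
    (f : α → β) (b : β) : #(univ.image f) + #{a | f a = b} ≤ Fintype.card α + 1 := by
  have hsub : univ.image f ⊆ insert b (({a | ¬f a = b} : Finset α).image f) := by
    intro c hc
    obtain ⟨a, -, rfl⟩ := mem_image.1 hc
    by_cases ha : f a = b
    · simp [ha]
    · exact mem_insert_of_mem (mem_image_of_mem _ (by simp [ha]))
  have hcard := (card_le_card hsub).trans
    ((card_insert_le _ _).trans (Nat.add_le_add_right card_image_le 1))
  have hsplit := card_filter_add_card_filter_not (s := (univ : Finset α)) (fun a => f a = b)
  rw [card_univ] at hsplit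
  omega

theorem List.IsSuffix.foldl_mem_range {α β : Type*} {f : α → β → α} {u v : List β}
    (h : v <:+ u) (a : α) : u.foldl f a ∈ Set.range (v.foldl f) := by
  obtain ⟨w, rfl⟩ := h
  exact ⟨w.foldl f a, (List.foldl_append ..).symm⟩

section Automaton

variable {n : ℕ} {A : Type*} (δ : Fin n → A → Fin n)

theorem ser_wordMat (q : Fin n) (v : List A) :
    ser q (wordMat δ v) = (#{p | v.foldl δ p = q} : ℚ) - 1 := by
  simp [ser, wordMat, Matrix.sub_apply, Matrix.one_apply, sum_sub_distrib, sum_boole]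

theorem card_image_foldl_le_of_sub_le_ser {q : Fin n} {v : List A} {i : ℕ}
    (hv : (n : ℚ) - i ≤ ser q (wordMat δ v)) : #(univ.image (v.foldl δ)) ≤ i := by
  have himage : #(univ.image (v.foldl δ)) + #{p | v.foldl δ p = q} ≤ n + 1 := by
    simpa using card_image_univ_add_card_fiber_le (v.foldl δ) q
  rw [ser_wordMat] at hv
  have hfiber : n + 1 ≤ #{p | v.foldl δ p = q} + i := by
    exact_mod_cast (by linarith : (n : ℚ) + 1 ≤ #{p | v.foldl δ p = q} + i)
  omega

theorem wordMat_mem_image_funMatrix_of_suffix {v₀ v : List A} (h : v₀ <:+ v) :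
    wordMat δ v ∈ funMatrix '' {f | ∀ p, f p ∈ univ.image (v₀.foldl δ)} := by
  refine ⟨v.foldl δ, fun p => ?_, rfl⟩
  obtain ⟨r, hr⟩ := h.foldl_mem_range (f := δ) p
  exact mem_image.2 ⟨r, mem_univ r, hr⟩

end Automaton

theorem dim_span_suffix_matrices_general {n : ℕ} {A : Type*} (δ : Fin n → A → Fin n)
    (s : List A) (q : Fin n)
    (i : ℕ) :
    Module.finrank ℚ
      ↥(Submodule.span ℚ
        {M : Matrix (Fin n) (Fin n) ℚ |
          ∃ v : List A, v <:+ s ∧ M = wordMat δ v ∧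
            (n : ℚ) - i ≤ ser q (wordMat δ v)}) ≤
      (i - 1) * n + 1 := by
  set good : Set (List A) := {v | v <:+ s ∧ (n : ℚ) - i ≤ ser q (wordMat δ v)}
  rcases good.eq_empty_or_nonempty with hempty | hne
  · refine (Submodule.finrank_eq_zero.2 (span_eq_bot.2 ?_)).trans_le (Nat.zero_le _)
    rintro _ ⟨v, hvs, -, hv⟩
    exact absurd ⟨hvs, hv⟩ (Set.eq_empty_iff_forall_notMem.1 hempty v)
  obtain ⟨v₀, ⟨hv₀s, hv₀⟩, hmin⟩ := (measure List.length).wf.has_min good hne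
  set T := univ.image (v₀.foldl δ)
  calc _ ≤ finrank ℚ (span ℚ (funMatrix '' {f | ∀ p, f p ∈ T})) := by
        refine finrank_mono (span_mono ?_)
        rintro _ ⟨v, hvs, rfl, hv⟩
        exact wordMat_mem_image_funMatrix_of_suffix δ
          (List.suffix_of_suffix_length_le hv₀s hvs (not_lt.1 (hmin v ⟨hvs, hv⟩)))
    _ ≤ n * (#T - 1) + 1 := by
        simpa using finrank_span_funMatrix_le T (univ_nonempty_iff.2 ⟨q⟩ |>.image _)
    _ ≤ (i - 1) * n + 1 := by
        rw [mul_comm]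
        gcongr
        exact card_image_foldl_le_of_sub_le_ser δ hv₀

/-- For a synchronizing word `s` of an `n`-state automaton synchronizing to
the state `q`, the ℚ-span `V` of the matrices `M_v` of the suffixes `v` of
`s` with `(S,v) ≥ n − i` satisfies `dim V ≤ (i−1)n + 1`. -/
theorem dim_span_suffix_matrices {n : ℕ} {A : Type*} (δ : Fin n → A → Fin n)
    (s : List A) (q : Fin n) (hs : ∀ p : Fin n, s.foldl δ p = q)
    (i : ℕ) (hi : 1 ≤ i) :
    Module.finrank ℚ
      ↥(Submodule.span ℚ
        {M : Matrix (Fin n) (Fin n) ℚ |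
          ∃ v : List A, v <:+ s ∧ M = wordMat δ v ∧
            (n : ℚ) - i ≤ ser q (wordMat δ v)}) ≤
      (i - 1) * n + 1 :=
  dim_span_suffix_matrices_general δ s q i
end

section
/- Call a synchronizing word s = utv (any factorization) irreducible if M_{utv} ∼_q M_{uv} forces t to be empty. If s is an irreducible synchronizing word of an automaton with Q·s = {q}, then no two distinct suffixes of s are q-equivalent. -/
lemma wordMat_append {n : ℕ} {A : Type*} (δ : Fin n → A → Fin n)
    (u w : List A) (i j : Fin n) :
    wordMat δ (u ++ w) i j = wordMat δ w (u.foldl δ i) j := by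
  simp [wordMat, List.foldl_append]

/-- For an irreducible synchronizing word `s` (i.e. `M_{utv} ∼_q M_{uv}`
forces `t` empty for every factorization `s = utv`) synchronizing the
automaton to the state `q`, no two distinct suffixes of `s` are
`q`-equivalent. -/
theorem irreducible_suffixes_not_q_equiv {n : ℕ} {A : Type*}
    (δ : Fin n → A → Fin n) (s : List A) (q : Fin n)
    (hs : ∀ p : Fin n, s.foldl δ p = q)
    (hirr : ∀ u t v : List A, s = u ++ t ++ v →
      (∀ i, wordMat δ (u ++ t ++ v) i q = wordMat δ (u ++ v) i q) → t = []) :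
    ∀ v₁ v₂ : List A, v₁ <:+ s → v₂ <:+ s → v₁ ≠ v₂ →
      ¬ (∀ i, wordMat δ v₁ i q = wordMat δ v₂ i q) := by
  have key : ∀ v₁ v₂ : List A, v₁ <:+ s → v₂ <:+ v₁ →
      (∀ i, wordMat δ v₁ i q = wordMat δ v₂ i q) → v₁ = v₂ := by
    intro v₁ v₂ h₁ h₂ heq
    obtain ⟨t, ht⟩ := h₂
    obtain ⟨u, hu⟩ := h₁
    have hsplit : s = u ++ t ++ v₂ := by
      rw [List.append_assoc, ht, hu]
    have := hirr u t v₂ hsplit (fun i => by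
      rw [List.append_assoc, wordMat_append δ u (t ++ v₂), wordMat_append δ u v₂, ht]
      exact heq _)
    rw [← ht, this, List.nil_append]
  intro v₁ v₂ h₁ h₂ hne heq
  rcases List.suffix_or_suffix_of_suffix h₁ h₂ with h | h
  · exact hne (key v₂ v₁ h₂ h (fun i => (heq i).symm)).symm
  · exact hne (key v₁ v₂ h₁ h heq)
end

section
/- If a set U of n×n 0-1 matrices, each with exactly one unit per row and at most one unit outside a fixed column q, is such that its distinct members are pairwise not q-equivalent and each has exactly n−1 units in column q, then the matrices in U are linearly independent over ℚ and |U| ≤ n; moreover every nonzero matrix of a word lying in the ℚ-span of U is already a member of U. -/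
open Finset Finsupp Matrix

theorem Finsupp.exists_eq_single_one_of_sum_eq_one {ι R : Type*} [Semiring R] [CharZero R]
    {l : ι →₀ R} (h01 : ∀ i, l i = 0 ∨ l i = 1) (hsum : l.sum (fun _ c => c) = 1) :
    ∃ i, l = single i 1 := by
  have hone : ∀ i ∈ l.support, l i = 1 := fun i hi => (h01 i).resolve_left (mem_support_iff.mp hi)
  have hcard : #l.support = 1 := by
    have : l.sum (fun _ c => c) = #l.support := by
      rw [Finsupp.sum, Finset.sum_congr rfl hone]
      simp
    exact_mod_cast this ▸ hsum
  obtain ⟨i, hi⟩ := card_eq_one.mp hcard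
  exact ⟨i, hone i (by simp [hi]) ▸ (support_eq_singleton.mp hi).2⟩

theorem Finsupp.linearCombination_pi_single_one_apply {ι κ R : Type*} [Semiring R]
    [DecidableEq κ] {row : ι → κ} (hrow : Function.Injective row) (l : ι →₀ R) (i : ι) :
    linearCombination R (fun j => (Pi.single (row j) 1 : κ → R)) l (row i) = l i := by
  classical
  simp [linearCombination_apply, Finsupp.sum, Finset.sum_apply, Pi.single_apply, hrow.eq_iff]
  exact Eq.symm

variable {n : ℕ}

theorem matOf_mulVec (f : Fin n → Fin n) (v : Fin n → ℚ) : matOf f *ᵥ v = v ∘ f := by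
  ext i
  simp [matOf, mulVec, dotProduct]

theorem sum_eq_one_of_linearCombination_eq_matOf {ι : Type*}
    {v : ι → Matrix (Fin n) (Fin n) ℚ} (hv : ∀ i, ∃ g, v i = matOf g) (k : Fin n)
    {l : ι →₀ ℚ} {f : Fin n → Fin n} (h : linearCombination ℚ v l = matOf f) :
    l.sum (fun _ c => c) = 1 := by
  have hrowSum : ∀ g : Fin n → Fin n, (mulVecBilin ℚ ℚ).flip 1 (matOf g) = 1 := fun g => by
    simp [matOf_mulVec]
  have hv1 : (mulVecBilin ℚ ℚ).flip 1 ∘ v = fun _ => 1 := funext fun i => by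
    obtain ⟨g, hg⟩ := hv i
    simp only [Function.comp_apply, hg, hrowSum]
  have := congrFun (congrArg ((mulVecBilin ℚ ℚ).flip 1) h) k
  rw [apply_linearCombination] at this
  simpa [hv1, hrowSum, linearCombination_apply, Finsupp.sum, Finset.sum_apply] using this

/-- Entry `i` of `outsideCol q A` is the sum of the entries of row `i` of `A` outside column `q`. -/
def outsideCol (q : Fin n) : Matrix (Fin n) (Fin n) ℚ →ₗ[ℚ] Fin n → ℚ :=
  (mulVecBilin ℚ ℚ).flip fun j => if j = q then 0 else 1

theorem outsideCol_matOf (q : Fin n) (f : Fin n → Fin n) (i : Fin n) :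
    outsideCol q (matOf f) i = if f i = q then 0 else 1 := by
  simp [outsideCol, matOf_mulVec]

theorem matOf_apply_col_eq_of_outsideCol_eq {q : Fin n} {f g : Fin n → Fin n}
    (h : outsideCol q (matOf f) = outsideCol q (matOf g)) (i : Fin n) :
    matOf f i q = matOf g i q := by
  have := congrFun h i
  simp only [outsideCol_matOf, matOf] at this ⊢
  split_ifs at this ⊢ <;> simp_all

theorem exists_outsideCol_matOf_eq_single {q : Fin n} {f : Fin n → Fin n}
    (h : #{i | matOf f i q = 1} = n - 1) : ∃ r, outsideCol q (matOf f) = Pi.single r 1 := by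
  have hpos : 0 < n := q.pos
  have hcard : #{i | ¬f i = q} = 1 := by
    have hsplit := card_filter_add_card_filter_not (s := univ) fun i : Fin n => f i = q
    simp only [matOf, ite_eq_left_iff, zero_ne_one, imp_false, not_not] at h
    simp only [card_univ, Fintype.card_fin] at hsplit
    omega
  obtain ⟨r, hr⟩ := card_eq_one.mp hcard
  refine ⟨r, funext fun i => ?_⟩
  have hi := Finset.ext_iff.mp hr i
  simp only [mem_filter, mem_univ, true_and, mem_singleton] at hi
  by_cases i = r <;> simp_all [outsideCol_matOf]

theorem exists_eq_single_of_linearCombination_eq_matOf {q : Fin n} {ι : Type*}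
    {v : ι → Matrix (Fin n) (Fin n) ℚ} (hv : ∀ i, ∃ g, v i = matOf g) {row : ι → Fin n}
    (hrow : ∀ i, outsideCol q (v i) = Pi.single (row i) 1) (hinj : Function.Injective row)
    {l : ι →₀ ℚ} {f : Fin n → Fin n} (h : linearCombination ℚ v l = matOf f) :
    ∃ i, l = single i 1 := by
  have hcoeff : ∀ i, l i = outsideCol q (matOf f) (row i) := fun i => by
    rw [← h, apply_linearCombination, show outsideCol q ∘ v = _ from funext hrow,
      linearCombination_pi_single_one_apply hinj]
  refine exists_eq_single_one_of_sum_eq_one (fun i => ?_)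
    (sum_eq_one_of_linearCombination_eq_matOf hv q h)
  rw [hcoeff, outsideCol_matOf]
  split_ifs <;> simp

/-- Let `U` be a set of matrices of words, each with exactly `n − 1` units
in column `q` (hence exactly one unit outside column `q`), pairwise not
`q`-equivalent. Then the matrices of `U` are linearly independent,
`|U| ≤ n`, and every nonzero matrix of a word lying in the ℚ-span of `U`
is already a member of `U`. -/
theorem near_sync_matrices {n : ℕ} (q : Fin n)
    (U : Set (Matrix (Fin n) (Fin n) ℚ))
    (hword : ∀ M ∈ U, ∃ f : Fin n → Fin n, M = matOf f)
    (hcol : ∀ M ∈ U,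
      (Finset.univ.filter fun i : Fin n => M i q = 1).card = n - 1)
    (hne : ∀ M ∈ U, ∀ N ∈ U, M ≠ N → ∃ i, M i q ≠ N i q) :
    LinearIndependent ℚ ((↑) : U → Matrix (Fin n) (Fin n) ℚ) ∧
    U.ncard ≤ n ∧
    ∀ f : Fin n → Fin n, matOf f ≠ 0 →
      matOf f ∈ Submodule.span ℚ U → matOf f ∈ U := by
  classical
  have hword' : ∀ M : U, ∃ f, (M : Matrix (Fin n) (Fin n) ℚ) = matOf f := fun M => hword M M.2
  have hsingle : ∀ M : U, ∃ r, outsideCol q M = Pi.single r 1 := fun M => by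
    obtain ⟨f, hf⟩ := hword' M
    exact hf ▸ exists_outsideCol_matOf_eq_single (hf ▸ hcol M M.2)
  choose row hrow using hsingle
  have hinj : Function.Injective row := fun M N hMN => by
    by_contra hMN'
    obtain ⟨i, hi⟩ := hne M M.2 N N.2 (Subtype.coe_ne_coe.mpr hMN')
    obtain ⟨f, hf⟩ := hword' M
    obtain ⟨g, hg⟩ := hword' N
    rw [hf, hg] at hi
    exact hi (matOf_apply_col_eq_of_outsideCol_eq (by rw [← hf, ← hg, hrow, hrow, hMN]) i)
  refine ⟨?_, ?_, fun f _ hf => ?_⟩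
  · refine LinearIndependent.of_comp (outsideCol q) ?_
    rw [show outsideCol q ∘ _ = _ from funext hrow]
    exact (Pi.linearIndependent_single_one (Fin n) ℚ).comp row hinj
  · simpa [Nat.card_coe_set_eq] using Nat.card_le_card_of_injective row hinj
  · obtain ⟨l, hl⟩ := (Finsupp.mem_span_iff_linearCombination ℚ U _).mp hf
    obtain ⟨M, rfl⟩ := exists_eq_single_of_linearCombination_eq_matOf hword' hrow hinj hl
    rw [← hl, linearCombination_single, one_smul]
    exact M.2
end
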